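/- For every positive integer n, Signgiver has a strategy in the prefix-discrepancy game on [n] such that, no matter in which order Positioner queries the positions, at every time t and for every 1 ≤ j ≤ n the board satisfies |Σ_{i=1}^{j} x_i^t| ≤ (3/2)·√n. Consequently, the game value satisfies d(n) ≤ (3/2)·√n. -/

import Mathlib

/-- A Signgiver strategy in the prefix-discrepancy game on `[n]` (positions
`Fin n`): given the history of play (a list of (position, sign) pairs, most
recent first) and the position just queried by Positioner, it returns a sign. -/
def SgStrategy (n : ℕ) : Type := List (Fin n × ℤ) → Fin n → ℤ

/-- A valid strategy always answers `+1` or `-1`. -/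
def ValidStrategy {n : ℕ} (σ : SgStrategy n) : Prop :=
  ∀ h i, σ h i = 1 ∨ σ h i = -1

/-- The history of play produced by the strategy `σ` against the (chronological,
most recent first) list `qs` of positions queried by Positioner. -/
def playHist {n : ℕ} (σ : SgStrategy n) : List (Fin n) → List (Fin n × ℤ)
  | [] => []
  | q :: qs => (q, σ (playHist σ qs) q) :: playHist σ qs

/-- The value of the board at position `i` given the history `h`: the assigned
sign if `i` has been queried, and `0` otherwise. -/
def boardVal {n : ℕ} (h : List (Fin n × ℤ)) (i : Fin n) : ℤ :=
  ((h.find? fun p => decide (p.1 = i)).map Prod.snd).getD 0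

/-- The signed discrepancy `disc(j) = Σ_{i=1}^{j} x_i` of the prefix `[1,j]`
(positions of index `< j` in the 0-indexed board). -/
def prefixDisc {n : ℕ} (h : List (Fin n × ℤ)) (j : ℕ) : ℤ :=
  ∑ p ∈ Finset.univ.filter (fun p : Fin n => (p : ℕ) < j), boardVal h p

/-!
Cut the positions into consecutive blocks of length `b = ⌊√(2n)⌋`. Signgiver answers `+1` in a
block whose current sum is `0` and `-1` in a block whose sum is `1`, so every block always sums
to `0` or `1`. A prefix of length `j = b f + a` with `a < b` consists of `f` whole blocks,
contributing between `0` and `f`, and of the first `a` positions of the next block, whose sum `P`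
satisfies `|P| ≤ a` and, since the remaining `b - a` positions of that block complete it to a
sum of at most `1`, also `P ≤ b + 1 - a`. As `2 j < (b + 1)²`, this gives a discrepancy of at
most `b ≤ √(2n) ≤ (3/2)√n`.
-/

open Finset

def blockSum (b : ℕ) (x : ℕ → ℤ) (k : ℕ) : ℤ :=
  ∑ i ∈ Ico (b * k) (b * k + b), x i

structure BlockBalanced (b : ℕ) (x : ℕ → ℤ) : Prop where
  abs_le_one : ∀ i, |x i| ≤ 1
  blockSum_mem_Icc : ∀ k, blockSum b x k ∈ Set.Icc 0 1

lemma abs_sum_le_card_of_abs_le_one {ι : Type*} (s : Finset ι) {x : ι → ℤ}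
    (hx : ∀ i, |x i| ≤ 1) : |∑ i ∈ s, x i| ≤ #s := by
  calc |∑ i ∈ s, x i| ≤ ∑ i ∈ s, |x i| := abs_sum_le_sum_abs _ _
    _ ≤ ∑ _i ∈ s, (1 : ℤ) := sum_le_sum fun i _ => hx i
    _ = #s := by simp

lemma sum_range_mul_eq_sum_blockSum (b : ℕ) (x : ℕ → ℤ) (f : ℕ) :
    ∑ i ∈ range (b * f), x i = ∑ k ∈ range f, blockSum b x k := by
  induction f with
  | zero => simp
  | succ f ih =>
    rw [sum_range_succ, ← ih, blockSum, mul_add_one,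
      sum_range_add_sum_Ico _ (Nat.le_add_right _ _)]

lemma sum_Ico_update_of_eq_zero (x : ℕ → ℤ) {q : ℕ} (hq : x q = 0) (s : ℤ) (lo hi : ℕ) :
    ∑ i ∈ Ico lo hi, Function.update x q s i =
      ∑ i ∈ Ico lo hi, x i + if q ∈ Ico lo hi then s else 0 := by
  split_ifs with hmem
  · rw [sum_update_of_mem hmem, ← add_sum_erase _ _ hmem, hq, sdiff_singleton_eq_erase]; ring
  · rw [sum_update_of_notMem hmem, add_zero]

lemma add_le_of_two_mul_lt_sq {b f a m : ℤ} (hb : 0 < b) (hj : 2 * (b * f + a) < (b + 1) ^ 2)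
    (hma : m ≤ a) (hmb : m ≤ b + 1 - a) : f + m ≤ b := by
  nlinarith

namespace BlockBalanced

variable {b : ℕ} {x : ℕ → ℤ}

lemma sum_range_mul_mem_Icc (hx : BlockBalanced b x) (f : ℕ) :
    ∑ i ∈ range (b * f), x i ∈ Set.Icc (0 : ℤ) f := by
  rw [sum_range_mul_eq_sum_blockSum]
  constructor
  · exact sum_nonneg fun k _ => (hx.blockSum_mem_Icc k).1
  · calc ∑ k ∈ range f, blockSum b x k ≤ ∑ _k ∈ range f, (1 : ℤ) :=
          sum_le_sum fun k _ => (hx.blockSum_mem_Icc k).2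
      _ = f := by simp

lemma abs_sum_range_le (hx : BlockBalanced b x) {j : ℕ} (hj : 2 * j < (b + 1) ^ 2) :
    |∑ i ∈ range j, x i| ≤ b := by
  rcases Nat.eq_zero_or_pos b with rfl | hb
  · obtain rfl : j = 0 := by omega
    simp
  set f := j / b
  have hdiv : b * f + j % b = j := Nat.div_add_mod j b
  have hbf : b * f ≤ j := by omega
  have hjb : j ≤ b * f + b := by have := Nat.mod_lt j hb; omega
  have hfull := hx.sum_range_mul_mem_Icc f
  have hblock := hx.blockSum_mem_Icc f
  rw [blockSum, ← sum_Ico_consecutive x hbf hjb] at hblock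
  have hpart := abs_le.mp (abs_sum_le_card_of_abs_le_one (Ico (b * f) j) hx.abs_le_one)
  have hrest := abs_le.mp (abs_sum_le_card_of_abs_le_one (Ico j (b * f + b)) hx.abs_le_one)
  rw [Nat.card_Ico, Nat.cast_sub hbf, Nat.cast_mul] at hpart
  rw [Nat.card_Ico, Nat.cast_sub hjb, Nat.cast_add, Nat.cast_mul] at hrest
  have hdivz : (b : ℤ) * f + (j % b : ℕ) = j := by exact_mod_cast hdiv
  have hjz : 2 * ((b : ℤ) * f + (j % b : ℕ)) < (b + 1) ^ 2 := by rw [hdivz]; exact_mod_cast hj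
  have hupper := add_le_of_two_mul_lt_sq (m := ∑ i ∈ Ico (b * f) j, x i)
    (by exact_mod_cast hb) hjz (by linarith) (by linarith [hblock.2])
  rw [← sum_range_add_sum_Ico x hbf, abs_le]
  constructor <;> linarith [hfull.1, hfull.2]

lemma update (hx : BlockBalanced b x) {q : ℕ} (hq : x q = 0) :
    BlockBalanced b (Function.update x q (if blockSum b x (q / b) ≤ 0 then 1 else -1)) where
  abs_le_one i := by
    rcases eq_or_ne i q with rfl | hi
    · rw [Function.update_self]; split_ifs <;> simp
    · rw [Function.update_of_ne hi]; exact hx.abs_le_one i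
  blockSum_mem_Icc k := by
    rw [blockSum, sum_Ico_update_of_eq_zero x hq, ← blockSum]
    by_cases hmem : q ∈ Ico (b * k) (b * k + b)
    · obtain rfl : q / b = k := by
        rw [mem_Ico] at hmem
        exact Nat.div_eq_of_lt_le (by linarith) (by linarith)
      have := hx.blockSum_mem_Icc (q / b)
      rw [if_pos hmem, Set.mem_Icc] at *
      split_ifs <;> omega
    · rw [if_neg hmem, add_zero]
      exact hx.blockSum_mem_Icc k

end BlockBalanced

def boardExt {n : ℕ} (h : List (Fin n × ℤ)) (i : ℕ) : ℤ :=
  if hi : i < n then boardVal h ⟨i, hi⟩ else 0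

lemma prefixDisc_eq_sum_range {n : ℕ} (h : List (Fin n × ℤ)) (j : ℕ) :
    prefixDisc h j = ∑ i ∈ range j, boardExt h i := by
  have hext : ∀ i ≥ n, boardExt h i = 0 := fun i hi => dif_neg (not_lt.mpr hi)
  calc prefixDisc h j = ∑ i ∈ range n, if i < j then boardExt h i else 0 := by
        rw [prefixDisc, sum_filter, sum_fin_eq_sum_range]
        refine sum_congr rfl fun i hi => ?_
        simp [boardExt, mem_range.mp hi]
    _ = ∑ i ∈ range j, boardExt h i := by
        rw [← sum_filter]
        refine sum_subset (fun i hi => by simp_all) fun i hij hi => hext i ?_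
        simp_all

lemma boardVal_cons {n : ℕ} (q : Fin n) (s : ℤ) (h : List (Fin n × ℤ)) :
    boardVal ((q, s) :: h) = Function.update (boardVal h) q s := by
  funext i
  rcases eq_or_ne q i with rfl | hqi
  · simp [boardVal]
  · simp [boardVal, hqi, Function.update_of_ne hqi.symm]

lemma boardExt_cons {n : ℕ} (q : Fin n) (s : ℤ) (h : List (Fin n × ℤ)) :
    boardExt ((q, s) :: h) = Function.update (boardExt h) q s := by
  funext i
  rcases eq_or_ne i q with rfl | hi
  · simp [boardExt, boardVal_cons]
  · have : ∀ hi' : i < n, (⟨i, hi'⟩ : Fin n) ≠ q := fun _ h => hi (congrArg Fin.val h)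
    simp [boardExt, boardVal_cons, Function.update_of_ne hi, this]

lemma boardExt_nil {n : ℕ} : boardExt ([] : List (Fin n × ℤ)) = 0 := by
  funext i; simp [boardExt, boardVal]

lemma boardExt_playHist_of_notMem {n : ℕ} (σ : SgStrategy n) {qs : List (Fin n)} {q : Fin n}
    (hq : q ∉ qs) : boardExt (playHist σ qs) q = 0 := by
  induction qs with
  | nil => rw [playHist, boardExt_nil, Pi.zero_apply]
  | cons p qs ih =>
    rw [List.mem_cons, not_or] at hq
    rw [playHist, boardExt_cons, Function.update_of_ne (Fin.val_injective.ne hq.1)]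
    exact ih hq.2

def blockStrategy (n b : ℕ) : SgStrategy n := fun h q =>
  if blockSum b (boardExt h) (q / b) ≤ 0 then 1 else -1

lemma blockStrategy_valid (n b : ℕ) : ValidStrategy (blockStrategy n b) := by
  intro h q
  unfold blockStrategy
  split_ifs <;> simp

lemma blockBalanced_playHist (n b : ℕ) {qs : List (Fin n)} (hqs : qs.Nodup) :
    BlockBalanced b (boardExt (playHist (blockStrategy n b) qs)) := by
  induction qs with
  | nil => exact ⟨by simp [boardExt_nil, playHist], by simp [boardExt_nil, playHist, blockSum]⟩
  | cons q qs ih =>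
    rw [List.nodup_cons] at hqs
    rw [playHist, boardExt_cons]
    exact (ih hqs.2).update (boardExt_playHist_of_notMem _ hqs.1)

theorem stmt_11 (n : ℕ) :
    ∃ σ : SgStrategy n, ValidStrategy σ ∧
      ∀ qs : List (Fin n), qs.Nodup →
        ∀ j, 1 ≤ j → j ≤ n →
          |(prefixDisc (playHist σ qs) j : ℝ)| ≤ 3 / 2 * Real.sqrt n := by
  set b := Nat.sqrt (2 * n)
  refine ⟨blockStrategy n b, blockStrategy_valid n b, fun qs hqs j _ hjn => ?_⟩
  have hj : 2 * j < (b + 1) ^ 2 := (Nat.mul_le_mul_left 2 hjn).trans_lt (Nat.lt_succ_sqrt' _)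
  have hdisc := (blockBalanced_playHist n b hqs).abs_sum_range_le hj
  rw [← prefixDisc_eq_sum_range] at hdisc
  calc |(prefixDisc (playHist (blockStrategy n b) qs) j : ℝ)| ≤ b := by exact_mod_cast hdisc
    _ ≤ √(2 * n) := by exact_mod_cast Real.nat_sqrt_le_real_sqrt
    _ ≤ 3 / 2 * √n := by
      rw [Real.sqrt_mul zero_le_two]
      gcongr
      rw [Real.sqrt_le_left (by norm_num)]
      norm_num
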